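/- arXiv:2005.04394 — 4 statements merged into one kernel-verified Lean document; each statement's English description precedes it below -/
import Mathlib

section
/- The Kronecker sum (componentwise XOR analogue of the Kronecker product over GF(2)) of the j-r vectors (η_r,0), (η_{r+1},0), ..., (η_{j-1},0), where each η_k ∈ {0,1}, produces a binary vector of length 2^{j-r}; as the η_k range over all choices with η_k = 0 forced whenever v[k+1] = 0, the number of distinct resulting vectors is exactly 2^{W_v}, where W_v is the number of indices k with v[k+1] = 1. -/
/-- Kronecker sum over GF(2): like the Kronecker product but with addition in place of
multiplication; entry at position `(i-1)q + m` is `a[i] + b[m]`. -/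
def kronSum {p q : ℕ} (a : Fin p → ZMod 2) (b : Fin q → ZMod 2) : Fin (p * q) → ZMod 2 :=
  fun x => a (finProdFinEquiv.symm x).1 + b (finProdFinEquiv.symm x).2

/-- Iterated Kronecker sum `(η_0, 0) ⊞ (η_1, 0) ⊞ ⋯ ⊞ (η_{t-1}, 0)`,
a binary vector of length `2^t`. -/
def iterKron : (t : ℕ) → (Fin t → ZMod 2) → (Fin (2 ^ t) → ZMod 2)
  | 0, _ => fun _ => 0
  | t + 1, η => fun x =>
      kronSum (fun i : Fin 2 => if i = 0 then η 0 else 0)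
        (iterKron t (fun k => η k.succ)) (Fin.cast (by ring) x)

/-!
Reading the sequence `(η_0,0) ⊞ s` of length `2^(t+1)` as two halves, the second half is `s`
and the first half is `s + η_0`. Hence by induction `η ↦ (η_0,0) ⊞ ⋯ ⊞ (η_{t-1},0)` is
injective, and the count is that of the admissible `η`: one free bit for each one of `v`.
-/

open Finset

theorem kronSum_finProdFinEquiv {p q : ℕ} (a : Fin p → ZMod 2) (b : Fin q → ZMod 2)
    (i : Fin p) (m : Fin q) : kronSum a b (finProdFinEquiv (i, m)) = a i + b m := by
  simp [kronSum]

theorem iterKron_succ_apply {t : ℕ} (η : Fin (t + 1) → ZMod 2) (i : Fin 2) (m : Fin (2 ^ t)) :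
    iterKron (t + 1) η (Fin.cast (pow_succ' 2 t).symm (finProdFinEquiv (i, m))) =
      (if i = 0 then η 0 else 0) + iterKron t (Fin.tail η) m := by
  simp only [iterKron, Fin.cast_cast, Fin.cast_eq_self, kronSum_finProdFinEquiv]
  rfl

theorem iterKron_injective (t : ℕ) : Function.Injective (iterKron t) := by
  induction t with
  | zero => exact fun η η' _ => Subsingleton.elim η η'
  | succ t ih =>
    intro η η' h
    have htail : Fin.tail η = Fin.tail η' := ih <| funext fun m => by
      simpa [iterKron_succ_apply] using
        congrFun h (Fin.cast (pow_succ' 2 t).symm (finProdFinEquiv ((1 : Fin 2), m)))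
    have hhead : η 0 = η' 0 := by
      simpa [iterKron_succ_apply, htail] using
        congrFun h (Fin.cast (pow_succ' 2 t).symm (finProdFinEquiv ((0 : Fin 2), ⟨0, Nat.two_pow_pos t⟩)))
    rw [← Fin.cons_self_tail η, ← Fin.cons_self_tail η', hhead, htail]

theorem card_filter_forall_imp_eq {ι M : Type*} [Fintype ι] [DecidableEq ι] [Fintype M]
    [DecidableEq M] (p : ι → Prop) [DecidablePred p] (c : M) :
    #{f : ι → M | ∀ k, p k → f k = c} = Fintype.card M ^ #{k | ¬ p k} := by
  have : ({f : ι → M | ∀ k, p k → f k = c} : Finset _) =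
      Fintype.piFinset fun k => if p k then {c} else univ := by
    ext f; simp only [mem_filter, mem_univ, true_and, Fintype.mem_piFinset]
    refine forall_congr' fun k => ?_
    split_ifs with hk <;> simp [hk]
  rw [this, Fintype.card_piFinset]
  simp only [apply_ite card, card_singleton, card_univ]
  rw [prod_ite, prod_const_one, one_mul, prod_const]

/-- As the `η_k` range over all binary choices with `η_k = 0` forced whenever `v[k] = 0`,
the number of distinct repetition sequences
`(η_0,0) ⊞ ⋯ ⊞ (η_{t-1},0)` is exactly `2^{W_v}`, where `W_v` counts the ones of `v`. -/
theorem card_repetition_sequences {t : ℕ} (v : Fin t → ZMod 2) :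
    (((Finset.univ : Finset (Fin t → ZMod 2)).filter
        (fun η => ∀ k, v k = 0 → η k = 0)).image (iterKron t)).card
      = 2 ^ ((Finset.univ : Finset (Fin t)).filter (fun k => v k = 1)).card := by
  have hbit : ∀ a : ZMod 2, ¬ a = 0 ↔ a = 1 := by decide
  calc _ = #{η : Fin t → ZMod 2 | ∀ k, v k = 0 → η k = 0} :=
        card_image_of_injective _ (iterKron_injective t)
    _ = Fintype.card (ZMod 2) ^ #{k | ¬ v k = 0} := by
        -- the statement decides `∀ k : Fin t` by `Nat.decidableForallFin`, the lemma by
        -- `Fintype.decidableForallFintype`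
        convert card_filter_forall_imp_eq (v · = 0) (0 : ZMod 2)
    _ = 2 ^ #{k | v k = 1} := by simp only [ZMod.card, hbit]
end

section
/- The maximization of ∑_{k=1}^{2^j} (-1)^{β[k]} α[k] over codewords β of the form β[(k-1)2^{j-r}+1 : k·2^{j-r}] = β_src[k] ⊕ s_l (for β_src ∈ C and s_l in a finite set S of binary sequences of length 2^{j-r}) equals the maximization over (β_src, l) of ∑_{k=1}^{2^r} (-1)^{β_src[k]} α'_l[k], where α'_l[k] = ∑_{m=1}^{2^{j-r}} α[(k-1)2^{j-r}+m]·(-1)^{s_l[m]}. -/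
/-! Since `(-1)^(a ⊕ b) = (-1)^a (-1)^b`, regrouping the sum over `Fin (2^j)` into `2^r` blocks of
length `2^(j-r)` shows that the two objectives agree for every pair `(β_src, s)`, so their
maxima agree. -/

open Finset

theorem ZMod.neg_one_pow_val_add {R : Type*} [Ring R] (a b : ZMod 2) :
    (-1 : R) ^ (a + b).val = (-1 : R) ^ a.val * (-1 : R) ^ b.val := by
  rw [ZMod.val_add, ← neg_one_pow_eq_pow_mod_two, pow_add]

theorem Fin.sum_cast_finProdFinEquiv {M : Type*} [AddCommMonoid M] {m n N : ℕ}
    (h : m * n = N) (f : Fin N → M) :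
    ∑ x, f x = ∑ k : Fin m, ∑ l : Fin n, f (Fin.cast h (finProdFinEquiv (k, l))) := by
  rw [← Fintype.sum_prod_type', ← Equiv.sum_comp (finProdFinEquiv.trans (finCongr h))]
  rfl

theorem sum_neg_one_pow_blockwise_add_mul {R : Type*} [CommRing R] {m n N : ℕ}
    (h : m * n = N) (α : Fin N → R) (b : Fin m → ZMod 2) (s : Fin n → ZMod 2) :
    ∑ x : Fin N, (-1 : R) ^ ((b (finProdFinEquiv.symm (Fin.cast h.symm x)).1
        + s (finProdFinEquiv.symm (Fin.cast h.symm x)).2).val) * α x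
      = ∑ k : Fin m, (-1 : R) ^ (b k).val *
          ∑ l : Fin n, α (Fin.cast h (finProdFinEquiv (k, l))) * (-1 : R) ^ (s l).val := by
  rw [Fin.sum_cast_finProdFinEquiv h]
  refine sum_congr rfl fun k _ => ?_
  rw [mul_sum]
  refine sum_congr rfl fun l _ => ?_
  simp only [Fin.cast_cast, Fin.cast_eq_self, Equiv.symm_apply_apply, ZMod.neg_one_pow_val_add]
  ring

theorem srnode_ml_decomposition_general {j r : ℕ}
    (h : 2 ^ r * 2 ^ (j - r) = 2 ^ j)
    (α : Fin (2 ^ j) → ℝ)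
    (C : Finset (Fin (2 ^ r) → ZMod 2)) (S : Finset (Fin (2 ^ (j - r)) → ZMod 2))
    (hCS : (C ×ˢ S).Nonempty) :
    ((C ×ˢ S).sup' hCS fun bs =>
        ∑ x : Fin (2 ^ j),
          (-1 : ℝ) ^ ((bs.1 (finProdFinEquiv.symm (Fin.cast h.symm x)).1
              + bs.2 (finProdFinEquiv.symm (Fin.cast h.symm x)).2).val) * α x)
      = (C ×ˢ S).sup' hCS fun bs =>
          ∑ k : Fin (2 ^ r), (-1 : ℝ) ^ ((bs.1 k).val) *
            ∑ m : Fin (2 ^ (j - r)),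
              α (Fin.cast h (finProdFinEquiv (k, m))) * (-1 : ℝ) ^ ((bs.2 m).val) :=
  sup'_congr hCS rfl fun bs _ => sum_neg_one_pow_blockwise_add_mul h α bs.1 bs.2

/-- Equation (24): the ML maximization `∑ₖ (-1)^{β[k]} α[k]` over codewords of the form
`β[(k-1)2^{j-r}+1 : k·2^{j-r}] = β_src[k] ⊕ s_l` (with `β_src ∈ C` and `s_l ∈ S`) equals the
maximization over pairs `(β_src, l)` of `∑ₖ (-1)^{β_src[k]} α'_l[k]`, where
`α'_l[k] = ∑ₘ α[(k-1)2^{j-r}+m]·(-1)^{s_l[m]}`. -/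
theorem srnode_ml_decomposition {j r : ℕ} (hr : r ≤ j)
    (h : 2 ^ r * 2 ^ (j - r) = 2 ^ j)
    (α : Fin (2 ^ j) → ℝ)
    (C : Finset (Fin (2 ^ r) → ZMod 2)) (S : Finset (Fin (2 ^ (j - r)) → ZMod 2))
    (hCS : (C ×ˢ S).Nonempty) :
    ((C ×ˢ S).sup' hCS fun bs =>
        ∑ x : Fin (2 ^ j),
          (-1 : ℝ) ^ ((bs.1 (finProdFinEquiv.symm (Fin.cast h.symm x)).1
              + bs.2 (finProdFinEquiv.symm (Fin.cast h.symm x)).2).val) * α x)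
      = (C ×ˢ S).sup' hCS fun bs =>
          ∑ k : Fin (2 ^ r), (-1 : ℝ) ^ ((bs.1 k).val) *
            ∑ m : Fin (2 ^ (j - r)),
              α (Fin.cast h (finProdFinEquiv (k, m))) * (-1 : ℝ) ^ ((bs.2 m).val) :=
  srnode_ml_decomposition_general h α C S hCS
end

section
/- Let 0.5 < ε < 1, c > 0 with Q(c) ≤ 1 − ε^{1/2^n}. If m satisfies (1/2)[c − Q⁻¹(Q(c)/(ε^{−1/2^n} − 1))]² ≤ m ≤ 2c², then Q(c − √(2m)) / (Q(c) + Q(c − √(2m))) ≥ ε^{1/2^n}. -/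
/-- The standard Gaussian tail function `Q(x) = (1/√(2π)) ∫ₓ^∞ e^{-t²/2} dt`. -/
noncomputable def gaussQ (x : ℝ) : ℝ :=
  ∫ t in Set.Ioi x, (1 / Real.sqrt (2 * Real.pi)) * Real.exp (-(t ^ 2) / 2)

/-- The inverse of the Gaussian tail function on `(0,1)`. -/
noncomputable def gaussQinv : ℝ → ℝ := Function.invFun gaussQ

/-!
Put `η = ε^{1/2^n}`. Then `Q(c) / (ε^{-1/2^n} - 1) = Q(c) η / (1 - η) =: a`, and the hypothesis
`Q(c) ≤ 1 - η` says exactly `a ≤ η < 1`, so `Q⁻¹(a)` is a genuine preimage of `a`. The lower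
bound on `m` gives `c - √(2m) ≤ Q⁻¹(a)`, hence `Q(c - √(2m)) ≥ a` as `Q` is decreasing, and
`q₂ / (q₁ + q₂) ≥ η` is equivalent to `q₂ ≥ q₁ η / (1 - η)`.
-/

open MeasureTheory ProbabilityTheory Set Filter Topology

lemma gaussQ_eq_integral_gaussianPDFReal (x : ℝ) :
    gaussQ x = ∫ t in Ioi x, gaussianPDFReal 0 1 t := by
  simp [gaussQ, gaussianPDFReal]

lemma gaussQ_eq_measureReal (x : ℝ) : gaussQ x = (gaussianReal 0 1).real (Ioi x) := by
  rw [measureReal_def, gaussianReal_apply_eq_integral _ one_ne_zero,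
    ENNReal.toReal_ofReal (setIntegral_nonneg measurableSet_Ioi fun t _ ↦
      gaussianPDFReal_nonneg _ _ t), gaussQ_eq_integral_gaussianPDFReal]

lemma gaussQ_eq_one_sub_cdf (x : ℝ) : gaussQ x = 1 - cdf (gaussianReal 0 1) x := by
  rw [gaussQ_eq_measureReal, cdf_eq_real, ← compl_Iic, measureReal_compl measurableSet_Iic,
    probReal_univ]

lemma antitone_gaussQ : Antitone gaussQ := fun x y hxy ↦ by
  simpa only [gaussQ_eq_one_sub_cdf, sub_le_sub_iff_left] using monotone_cdf _ hxy

lemma gaussQ_pos (x : ℝ) : 0 < gaussQ x := by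
  rw [gaussQ_eq_measureReal, measureReal_def]
  refine ENNReal.toReal_pos (fun h ↦ ?_) (measure_ne_top _ _)
  simpa using gaussianReal_absolutelyContinuous' 0 one_ne_zero h

lemma continuous_gaussQ : Continuous gaussQ := by
  refine continuous_iff_continuousAt.2 fun x ↦ ?_
  rw [funext gaussQ_eq_integral_gaussianPDFReal]
  exact ((integrable_gaussianPDFReal 0 1).integrableOn.continuousOn_Ici_primitive_Ioi
    (a₀ := x - 1)).continuousAt (Ici_mem_nhds (by linarith))

lemma tendsto_gaussQ_atTop : Tendsto gaussQ atTop (𝓝 0) := by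
  simpa using ((tendsto_cdf_atTop _).const_sub 1).congr fun x ↦ (gaussQ_eq_one_sub_cdf x).symm

lemma tendsto_gaussQ_atBot : Tendsto gaussQ atBot (𝓝 1) := by
  simpa using ((tendsto_cdf_atBot _).const_sub 1).congr fun x ↦ (gaussQ_eq_one_sub_cdf x).symm

lemma gaussQ_gaussQinv {y : ℝ} (h₀ : 0 < y) (h₁ : y < 1) : gaussQ (gaussQinv y) = y :=
  Function.invFun_eq <| mem_range_of_exists_le_of_exists_ge continuous_gaussQ
    (tendsto_gaussQ_atTop.eventually (eventually_le_nhds h₀)).exists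
    (tendsto_gaussQ_atBot.eventually (eventually_ge_nhds h₁)).exists

lemma le_div_add_iff_mul_div_one_sub_le {q₁ q₂ η : ℝ} (hq₁ : 0 < q₁) (hq₂ : 0 ≤ q₂)
    (hη : η < 1) : η ≤ q₂ / (q₁ + q₂) ↔ q₁ * η / (1 - η) ≤ q₂ := by
  rw [le_div_iff₀ (by positivity), div_le_iff₀ (by linarith)]
  constructor <;> intro h <;> linarith

lemma div_rpow_neg_sub_one {ε u : ℝ} (hε : 0 < ε) (hεu : ε ^ u ≠ 1) (q : ℝ) :
    q / (ε ^ (-u) - 1) = q * ε ^ u / (1 - ε ^ u) := by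
  have : ε ^ u ≠ 0 := (Real.rpow_pos_of_pos hε u).ne'
  have : 1 - ε ^ u ≠ 0 := sub_ne_zero.2 hεu.symm
  rw [Real.rpow_neg hε.le]
  field_simp

lemma sub_sqrt_le_of_sq_sub_le {a b s : ℝ} (h : (a - b) ^ 2 ≤ s) : a - √s ≤ b := by
  linarith [le_abs_self (a - b), Real.abs_le_sqrt h]

theorem low_mean_correct_prob_bound_general (n : ℕ) (ε c m : ℝ)
    (hε0 : 0.5 < ε)
    (hQc : gaussQ c ≤ 1 - ε ^ ((1 : ℝ) / 2 ^ n))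
    (hml : (1 / 2) * (c - gaussQinv (gaussQ c / (ε ^ (-((1 : ℝ) / 2 ^ n)) - 1))) ^ 2 ≤ m) :
    gaussQ (c - Real.sqrt (2 * m)) / (gaussQ c + gaussQ (c - Real.sqrt (2 * m)))
      ≥ ε ^ ((1 : ℝ) / 2 ^ n) := by
  have hε : 0 < ε := by norm_num at hε0; linarith
  set η := ε ^ ((1 : ℝ) / 2 ^ n)
  have hη₀ : 0 < η := Real.rpow_pos_of_pos hε _
  have hη₁ : η < 1 := by linarith [gaussQ_pos c]
  rw [div_rpow_neg_sub_one hε hη₁.ne] at hml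
  set a := gaussQ c * η / (1 - η)
  have ha₀ : 0 < a := div_pos (mul_pos (gaussQ_pos c) hη₀) (sub_pos.2 hη₁)
  have ha_le : a ≤ η := (div_le_iff₀ (sub_pos.2 hη₁)).2 (by nlinarith)
  have ha₁ : a < 1 := ha_le.trans_lt hη₁
  rw [ge_iff_le, le_div_add_iff_mul_div_one_sub_le (gaussQ_pos c) (gaussQ_pos _).le hη₁]
  calc a = gaussQ (gaussQinv a) := (gaussQ_gaussQinv ha₀ ha₁).symm
    _ ≤ gaussQ (c - √(2 * m)) := antitone_gaussQ (sub_sqrt_le_of_sq_sub_le (by linarith))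

/-- Low-mean regime of Observation 1: if `0.5 < ε < 1`, `c > 0` with
`Q(c) ≤ 1 − ε^{1/2^n}`, and `(1/2)[c − Q⁻¹(Q(c)/(ε^{−1/2^n} − 1))]² ≤ m ≤ 2c²`, then
`Q(c − √(2m)) / (Q(c) + Q(c − √(2m))) ≥ ε^{1/2^n}`. -/
theorem low_mean_correct_prob_bound (n : ℕ) (ε c m : ℝ)
    (hε0 : 0.5 < ε) (hε1 : ε < 1) (hc : 0 < c)
    (hQc : gaussQ c ≤ 1 - ε ^ ((1 : ℝ) / 2 ^ n))
    (hml : (1 / 2) * (c - gaussQinv (gaussQ c / (ε ^ (-((1 : ℝ) / 2 ^ n)) - 1))) ^ 2 ≤ m)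
    (hmu : m ≤ 2 * c ^ 2) :
    gaussQ (c - Real.sqrt (2 * m)) / (gaussQ c + gaussQ (c - Real.sqrt (2 * m)))
      ≥ ε ^ ((1 : ℝ) / 2 ^ n) :=
  low_mean_correct_prob_bound_general n ε c m hε0 hQc hml
end

section
/- Consider the single parity-check (Wagner) decoder: given α : Fin n → ℝ with all α[k] ≠ 0, let h[k] = 0 if α[k] ≥ 0 else 1, let z ∈ ZMod 2 be a target parity, and let k' = argmin_k |α[k]|. Define β̂[k'] = h[k'] ⊕ (z − ∑_k h[k]) and β̂[k] = h[k] otherwise. Then β̂ satisfies ∑_k β̂[k] = z and β̂ maximizes ∑_{k} (-1)^{β[k]} α[k] over all β ∈ (ZMod 2)^n with ∑_k β[k] = z. -/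
/-- Optimality of the Wagner decoder: with hard decisions `h[k]`, target parity `z`, and `k'`
a minimizer of `|α[k]|`, flipping (if needed) the least-reliable bit yields `betaHat` with parity
`z` which maximizes `∑ₖ (-1)^{β[k]} α[k]` over all `β` with parity `z`. -/
theorem wagner_decoder_optimal {n : ℕ} (hn : 1 ≤ n) (α : Fin n → ℝ)
    (hα : ∀ k, α k ≠ 0) (z : ZMod 2) (k' : Fin n) (hk' : ∀ k, |α k'| ≤ |α k|)
    (h : Fin n → ZMod 2) (hh : ∀ k, h k = if 0 ≤ α k then 0 else 1)
    (betaHat : Fin n → ZMod 2)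
    (hbetaHat : ∀ k, betaHat k = if k = k' then h k + (z - ∑ i, h i) else h k) :
    (∑ k, betaHat k = z) ∧
    ∀ β : Fin n → ZMod 2, (∑ k, β k = z) →
      ∑ k, (-1 : ℝ) ^ ((β k).val) * α k ≤ ∑ k, (-1 : ℝ) ^ ((betaHat k).val) * α k := by
  have two : ∀ a : ZMod 2, a = 0 ∨ a = 1 := by decide
  -- pointwise value lemma
  have P : ∀ (β : Fin n → ZMod 2) (k : Fin n),
      (-1 : ℝ) ^ ((β k).val) * α k = if β k = h k then |α k| else -|α k| := by
    intro β k
    rcases lt_or_ge (α k) 0 with hneg | hpos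
    · have hk : h k = 1 := by rw [hh k]; simp [not_le.mpr hneg]
      rcases two (β k) with hb | hb <;>
        simp [hb, hk, abs_of_neg hneg, ZMod.val_one]
    · have hpos' : 0 < α k := lt_of_le_of_ne hpos (Ne.symm (hα k))
      have hk : h k = 0 := by rw [hh k]; simp [hpos]
      rcases two (β k) with hb | hb <;>
        simp [hb, hk, abs_of_pos hpos', ZMod.val_one]
  have Ple : ∀ (β : Fin n → ZMod 2) (k : Fin n),
      (-1 : ℝ) ^ ((β k).val) * α k ≤ |α k| := by
    intro β k
    rw [P β k]
    split
    · exact le_rfl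
    · exact (neg_abs_le _).trans (le_refl _) |>.trans (le_abs_self _) |>.trans le_rfl
  -- parity of betaHat
  have hsum : ∑ k, betaHat k = z := by
    have heq : ∀ x ∈ Finset.univ.erase k', betaHat x = h x := by
      intro x hx
      rw [hbetaHat x, if_neg (Finset.ne_of_mem_erase hx)]
    rw [← Finset.sum_erase_add Finset.univ betaHat (Finset.mem_univ k'),
        Finset.sum_congr rfl heq, hbetaHat k', if_pos rfl]
    rw [← Finset.sum_erase_add Finset.univ h (Finset.mem_univ k')]
    ring
  refine ⟨hsum, ?_⟩
  intro β hβ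
  by_cases hz : (∑ i, h i) = z
  · -- no flip needed: betaHat = h
    have hbh : ∀ k, betaHat k = h k := by
      intro k
      rw [hbetaHat k]
      split
      · rw [hz]; ring
      · rfl
    have : ∑ k, (-1 : ℝ) ^ ((betaHat k).val) * α k = ∑ k, |α k| := by
      apply Finset.sum_congr rfl
      intro k _
      rw [P, if_pos (hbh k)]
    rw [this]
    exact Finset.sum_le_sum fun k _ => Ple β k
  · -- flip at k'
    have he : z - ∑ i, h i = 1 := by
      rcases two (z - ∑ i, h i) with h0 | h1
      · exact absurd (sub_eq_zero.mp h0).symm hz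
      · exact h1
    have hflip : betaHat k' = h k' + 1 := by rw [hbetaHat k', if_pos rfl, he]
    have hflipne : betaHat k' ≠ h k' := by
      rw [hflip]
      rcases two (h k') with h0 | h0 <;> simp [h0] <;> decide
    -- value of betaHat sum
    have hval : ∑ k, (-1 : ℝ) ^ ((betaHat k).val) * α k
        = (∑ k ∈ Finset.univ.erase k', |α k|) - |α k'| := by
      rw [← Finset.sum_erase_add Finset.univ _ (Finset.mem_univ k')]
      congr 1
      · apply Finset.sum_congr rfl
        intro x hx
        rw [P, if_pos]
        rw [hbetaHat x, if_neg (Finset.ne_of_mem_erase hx)]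
      · rw [P, if_neg hflipne]
    -- β must differ from h somewhere
    obtain ⟨j, hj⟩ : ∃ j, β j ≠ h j := by
      by_contra hc
      push_neg at hc
      apply hz
      rw [← hβ]
      exact Finset.sum_congr rfl fun k _ => (hc k).symm
    have hβle : ∑ k, (-1 : ℝ) ^ ((β k).val) * α k
        ≤ (∑ k ∈ Finset.univ.erase j, |α k|) - |α j| := by
      rw [← Finset.sum_erase_add Finset.univ _ (Finset.mem_univ j)]
      have h1 : ∑ x ∈ Finset.univ.erase j, (-1 : ℝ) ^ ((β x).val) * α x
          ≤ ∑ x ∈ Finset.univ.erase j, |α x| :=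
        Finset.sum_le_sum fun x _ => Ple β x
      have h2 : (-1 : ℝ) ^ ((β j).val) * α j = -|α j| := by
        rw [P, if_neg hj]
      linarith
    rw [hval]
    -- compare: S - 2|α j| ≤ S - 2|α k'|
    have hS : ∀ i : Fin n, (∑ k ∈ Finset.univ.erase i, |α k|) + |α i| = ∑ k, |α k| :=
      fun i => Finset.sum_erase_add Finset.univ _ (Finset.mem_univ i)
    have := hk' j
    have hSj := hS j
    have hSk := hS k'
    linarith
end
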